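/- arXiv:2007.04346 — 2 statements merged into one kernel-verified Lean document; each statement's English description precedes it below -/
import Mathlib

section
/- The function S(z,p) = (2z-1)·ln(p/(1-p)) - (z-p)·(1/p - 1/(1-p)) with p = L(t) = 1/(1+e^{-t}), viewed as a function of t ∈ ℝ for fixed z ∈ {0,1}, is concave in t. -/
/-- The standard logistic cumulative distribution function. -/
noncomputable def logisticCDF (t : ℝ) : ℝ := 1 / (1 + Real.exp (-t))

/-- The tailored (negative) loss `S(z, L(t))` used for covariate-balancing estimation of
instrument propensity scores, viewed as a function of the index `t`. -/
noncomputable def tailoredLoss (z t : ℝ) : ℝ :=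
  (2 * z - 1) * Real.log (logisticCDF t / (1 - logisticCDF t)) -
    (z - logisticCDF t) * (1 / logisticCDF t - 1 / (1 - logisticCDF t))

/-!
The logistic odds are `L(t) / (1 - L(t)) = eᵗ`, so the log-odds term of `S` is linear in `t`,
and for `z ∈ {0, 1}` the correction term collapses to `1 - e^{∓t}`:
`S(0, L(t)) = 1 - t - eᵗ` and `S(1, L(t)) = 1 + t - e⁻ᵗ`.
Each is an affine function minus an exponential, hence concave.
-/

open Real

lemma logisticCDF_pos (t : ℝ) : 0 < logisticCDF t := by
  rw [logisticCDF]; positivity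

lemma one_sub_logisticCDF (t : ℝ) : 1 - logisticCDF t = exp (-t) * logisticCDF t := by
  have : 1 + exp (-t) ≠ 0 := by positivity
  rw [logisticCDF]
  field_simp
  ring

lemma logisticCDF_div_one_sub (t : ℝ) : logisticCDF t / (1 - logisticCDF t) = exp t := by
  rw [one_sub_logisticCDF, div_mul_cancel_right₀ (logisticCDF_pos t).ne', exp_neg, inv_inv]

lemma log_logisticCDF_odds (t : ℝ) : log (logisticCDF t / (1 - logisticCDF t)) = t := by
  rw [logisticCDF_div_one_sub, log_exp]

lemma tailoredLoss_zero (t : ℝ) : tailoredLoss 0 t = -t + 1 - exp t := by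
  have hL : logisticCDF t ≠ 0 := (logisticCDF_pos t).ne'
  have h1L : 1 - logisticCDF t ≠ 0 := by rw [one_sub_logisticCDF]; positivity
  rw [tailoredLoss, log_logisticCDF_odds, ← logisticCDF_div_one_sub]
  field_simp
  ring

lemma tailoredLoss_one (t : ℝ) : tailoredLoss 1 t = t + 1 - exp (-t) := by
  have hL : logisticCDF t ≠ 0 := (logisticCDF_pos t).ne'
  rw [tailoredLoss, log_logisticCDF_odds, one_sub_logisticCDF]
  field_simp
  ring

lemma concaveOn_affine_sub_exp_mul (a b c : ℝ) :
    ConcaveOn ℝ Set.univ (fun t => a * t + b - exp (c * t)) := by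
  have hexp : ConvexOn ℝ Set.univ (fun t => exp (c * t)) := by
    simpa [Function.comp_def] using convexOn_exp.comp_linearMap (LinearMap.mulLeft ℝ c)
  exact (((LinearMap.mulLeft ℝ a).concaveOn convex_univ).add_const b).sub hexp

/-- for each `z ∈ {0,1}`, the tailored loss `t ↦ S(z, L(t))` is concave on ℝ. -/
theorem stmt_2 (z : ℝ) (hz : z = 0 ∨ z = 1) :
    ConcaveOn ℝ Set.univ (fun t => tailoredLoss z t) := by
  rcases hz with rfl | rfl
  · simpa [tailoredLoss_zero] using concaveOn_affine_sub_exp_mul (-1) 1 1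
  · simpa [tailoredLoss_one] using concaveOn_affine_sub_exp_mul 1 1 (-1)
end

section
/- Under assumptions A.1 (conditional independence), A.2 (exclusion), A.5 (strong overlap δ < π(X) < 1-δ), and integrability, the LATE identification identity holds: E[ZY/π(X)] - E[(1-Z)Y/(1-π(X))] = E[(D(1)-D(0))·(Y(1)-Y(0))] and E[ZD/π(X)] - E[(1-Z)D/(1-π(X))] = E[D(1)-D(0)]; consequently if additionally monotonicity D(1) ≥ D(0) a.s. and P(D(1)>D(0)) > 0 hold, the ratio equals E[Y(1)-Y(0) | D(1)>D(0)]. -/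
/-!
Write `W = (Y(0), Y(1), D(0), D(1))`. Conditional independence of `W` and `Z` given `X`, together
with `E[Z | X] = π(X)`, says that the law of `(X, W)` restricted to `{Z = 1}` has density `π(X)`
with respect to `μ`. Hence `E[Z G(W) / π(X)] = E[G(W)]`, and likewise with `1 - Z` and `1 - π`.
On `{Z = 1}` the observed `D`, `Y` are `D(1)`, `Y(D(1))`, and on `{Z = 0}` they are `D(0)`,
`Y(D(0))`; subtracting gives both contrasts. Under monotonicity `D(1) - D(0)` is the indicator of
the compliers `{D(0) < D(1)}`, which turns the ratio into the complier average effect.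
-/

open MeasureTheory ProbabilityTheory

section
variable {Ω : Type*} {m mΩ : MeasurableSpace Ω} [StandardBorelSpace Ω] {μ : Measure Ω}
  [IsFiniteMeasure μ]

lemma measureReal_inter_inter_eq_setIntegral_of_condIndepSet (hm : m ≤ mΩ) {S T A : Set Ω}
    {g : Ω → ℝ} {C : ℝ}
    (hS : MeasurableSet[m] S) (hT : MeasurableSet T) (hA : MeasurableSet A)
    (hg : StronglyMeasurable[m] g) (hg_bdd : ∀ᵐ ω ∂μ, ‖g ω‖ ≤ C)
    (hTA : CondIndepSet m hm T A μ) (hAg : μ⟦A | m⟧ =ᵐ[μ] g) :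
    μ.real (S ∩ T ∩ A) = ∫ ω in S ∩ T, g ω ∂μ := by
  have hTA' := (condIndepSet_iff m hm T A hT hA μ).mp hTA
  have hpull := condExp_stronglyMeasurable_mul_of_bound hm hg
    ((integrable_const (1 : ℝ)).indicator hT) C hg_bdd
  calc μ.real (S ∩ T ∩ A)
      = ∫ ω in S, (T ∩ A).indicator (fun _ => (1 : ℝ)) ω ∂μ := by
        rw [Set.inter_assoc, setIntegral_indicator (hT.inter hA)]; simp
    _ = ∫ ω in S, (μ⟦T ∩ A | m⟧) ω ∂μ :=
        (setIntegral_condExp hm ((integrable_const 1).indicator (hT.inter hA)) hS).symm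
    _ = ∫ ω in S, (μ[g * T.indicator (fun _ => (1 : ℝ)) | m]) ω ∂μ := by
        refine setIntegral_congr_ae (hm S hS) ?_
        filter_upwards [hTA', hAg, hpull] with ω h1 h2 h3 _
        rw [h1, h3, Pi.mul_apply, Pi.mul_apply, h2, mul_comm]
    _ = ∫ ω in S, (g * T.indicator (fun _ => (1 : ℝ))) ω ∂μ :=
        setIntegral_condExp hm (((integrable_const (1 : ℝ)).indicator hT).bdd_mul
          (hg.mono hm).aestronglyMeasurable hg_bdd) hS
    _ = ∫ ω in S ∩ T, g ω ∂μ := by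
        rw [← setIntegral_indicator hT]
        congr 1 with ω
        by_cases h : ω ∈ T <;> simp [h]

end

section
variable {Ω α β : Type*} [MeasurableSpace Ω] [StandardBorelSpace Ω] [MeasurableSpace α]
  [MeasurableSpace β] {μ : Measure Ω} [IsFiniteMeasure μ] {X : Ω → α} {W : Ω → β} {Z : Ω → ℝ}
  {π : α → ℝ}

lemma map_restrict_eq_map_withDensity_propensity (hX : Measurable X) (hW : Measurable W)
    (hZ : Measurable Z) (hπ : Measurable π) (hZ01 : ∀ ω, Z ω = 0 ∨ Z ω = 1)
    (hπ01 : ∀ x, π x ∈ Set.Icc 0 1)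
    (hcond : μ[Z | MeasurableSpace.comap X inferInstance] =ᵐ[μ] fun ω => π (X ω))
    (hci : CondIndepFun (MeasurableSpace.comap X inferInstance) hX.comap_le W Z μ) :
    (μ.restrict (Z ⁻¹' {1})).map (fun ω => (X ω, W ω))
      = (μ.withDensity fun ω => ENNReal.ofReal (π (X ω))).map (fun ω => (X ω, W ω)) := by
  have hXW : Measurable fun ω => (X ω, W ω) := hX.prodMk hW
  have hZ1 : MeasurableSet (Z ⁻¹' {1}) := hZ (measurableSet_singleton 1)
  have hZ_eq : (Z ⁻¹' {1}).indicator (fun _ => (1 : ℝ)) = Z := by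
    ext ω
    rcases hZ01 ω with h | h <;> simp [h]
  have hπX_bdd : ∀ᵐ ω ∂μ, ‖π (X ω)‖ ≤ 1 := ae_of_all _ fun ω => by
    rw [Real.norm_eq_abs, abs_le]
    constructor <;> linarith [(hπ01 (X ω)).1, (hπ01 (X ω)).2]
  refine Measure.ext_prod fun {s t} hs ht => ?_
  have hst : MeasurableSet (X ⁻¹' s ∩ W ⁻¹' t) := (hX hs).inter (hW ht)
  have hrect : μ.real (X ⁻¹' s ∩ W ⁻¹' t ∩ Z ⁻¹' {1}) = ∫ ω in X ⁻¹' s ∩ W ⁻¹' t, π (X ω) ∂μ :=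
    measureReal_inter_inter_eq_setIntegral_of_condIndepSet hX.comap_le ⟨s, hs, rfl⟩ (hW ht) hZ1
      (hπ.comp (comap_measurable X)).stronglyMeasurable hπX_bdd
      ((condIndepFun_iff_condIndepSet_preimage hW hZ).mp hci t {1} ht
        (measurableSet_singleton 1)) (by rwa [hZ_eq])
  rw [Measure.map_apply hXW (hs.prod ht), Measure.map_apply hXW (hs.prod ht),
    Set.mk_preimage_prod, Measure.restrict_apply hst, withDensity_apply _ hst,
    ← ofReal_integral_eq_lintegral_ofReal, ← hrect, ofReal_measureReal]
  · exact (integrable_const (1 : ℝ)).restrict.mono' (hπ.comp hX).aestronglyMeasurable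
      (ae_restrict_of_ae hπX_bdd)
  · exact ae_of_all _ fun ω => (hπ01 (X ω)).1

lemma integral_mul_eq_integral_propensity_mul (hX : Measurable X) (hW : Measurable W)
    (hZ : Measurable Z) (hπ : Measurable π) (hZ01 : ∀ ω, Z ω = 0 ∨ Z ω = 1)
    (hπ01 : ∀ x, π x ∈ Set.Icc 0 1)
    (hcond : μ[Z | MeasurableSpace.comap X inferInstance] =ᵐ[μ] fun ω => π (X ω))
    (hci : CondIndepFun (MeasurableSpace.comap X inferInstance) hX.comap_le W Z μ)
    {F : α × β → ℝ} (hF : Measurable F) :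
    ∫ ω, Z ω * F (X ω, W ω) ∂μ = ∫ ω, π (X ω) * F (X ω, W ω) ∂μ := by
  have hXW : Measurable fun ω => (X ω, W ω) := hX.prodMk hW
  have hZF : (fun ω => Z ω * F (X ω, W ω)) = (Z ⁻¹' {1}).indicator (fun ω => F (X ω, W ω)) := by
    ext ω
    rcases hZ01 ω with h | h <;> simp [h]
  rw [hZF, integral_indicator (hZ (measurableSet_singleton 1)),
    ← integral_map hXW.aemeasurable hF.aestronglyMeasurable,
    map_restrict_eq_map_withDensity_propensity hX hW hZ hπ hZ01 hπ01 hcond hci,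
    integral_map hXW.aemeasurable hF.aestronglyMeasurable,
    integral_withDensity_eq_integral_toReal_smul₀ (by fun_prop)
      (ae_of_all _ fun _ => ENNReal.ofReal_lt_top)]
  congr with ω
  rw [ENNReal.toReal_ofReal (hπ01 _).1, smul_eq_mul]

lemma integral_mul_div_propensity (hX : Measurable X) (hW : Measurable W)
    (hZ : Measurable Z) (hπ : Measurable π) (hZ01 : ∀ ω, Z ω = 0 ∨ Z ω = 1)
    (hπ01 : ∀ x, π x ∈ Set.Ioc 0 1)
    (hcond : μ[Z | MeasurableSpace.comap X inferInstance] =ᵐ[μ] fun ω => π (X ω))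
    (hci : CondIndepFun (MeasurableSpace.comap X inferInstance) hX.comap_le W Z μ)
    (G : β → ℝ) (hG : Measurable G) :
    ∫ ω, Z ω * G (W ω) / π (X ω) ∂μ = ∫ ω, G (W ω) ∂μ := by
  simp_rw [mul_div_assoc]
  rw [integral_mul_eq_integral_propensity_mul hX hW hZ hπ hZ01
    (fun x => Set.Ioc_subset_Icc_self (hπ01 x)) hcond hci (F := fun p => G p.2 / π p.1)
    (by fun_prop)]
  congr with ω
  exact mul_div_cancel₀ _ (hπ01 (X ω)).1.ne'

lemma integral_one_sub_mul_div_one_sub_propensity (hX : Measurable X) (hW : Measurable W)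
    (hZ : Measurable Z) (hπ : Measurable π) (hZ01 : ∀ ω, Z ω = 0 ∨ Z ω = 1)
    (hπ01 : ∀ x, π x ∈ Set.Ico 0 1)
    (hcond : μ[Z | MeasurableSpace.comap X inferInstance] =ᵐ[μ] fun ω => π (X ω))
    (hci : CondIndepFun (MeasurableSpace.comap X inferInstance) hX.comap_le W Z μ)
    (G : β → ℝ) (hG : Measurable G) :
    ∫ ω, (1 - Z ω) * G (W ω) / (1 - π (X ω)) ∂μ = ∫ ω, G (W ω) ∂μ := by
  have hZint : Integrable Z μ := (integrable_const (1 : ℝ)).mono' hZ.aestronglyMeasurable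
    (ae_of_all _ fun ω => by rcases hZ01 ω with h | h <;> simp [h])
  refine integral_mul_div_propensity (Z := fun ω => 1 - Z ω) (π := fun x => 1 - π x) hX hW
    (by fun_prop) (by fun_prop) (fun ω => ?_) (fun x => ?_) ?_
    (hci.comp measurable_id (measurable_const.sub measurable_id)) G hG
  · rcases hZ01 ω with h | h <;> simp [h]
  · have := hπ01 x
    constructor <;> linarith [this.1, this.2]
  · filter_upwards [condExp_sub (m := MeasurableSpace.comap X inferInstance)
      (integrable_const (1 : ℝ)) hZint, hcond] with ω h1 h2
    rw [show (fun ω => 1 - Z ω) = (fun _ => (1 : ℝ)) - Z from rfl, h1, Pi.sub_apply,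
      condExp_const hX.comap_le, h2]

lemma integral_ipw_contrast (hX : Measurable X) (hW : Measurable W)
    (hZ : Measurable Z) (hπ : Measurable π) (hZ01 : ∀ ω, Z ω = 0 ∨ Z ω = 1)
    (hπ01 : ∀ x, π x ∈ Set.Ioo 0 1)
    (hcond : μ[Z | MeasurableSpace.comap X inferInstance] =ᵐ[μ] fun ω => π (X ω))
    (hci : CondIndepFun (MeasurableSpace.comap X inferInstance) hX.comap_le W Z μ)
    {V : Ω → ℝ} {G₁ G₀ : β → ℝ} (hG₁ : Measurable G₁) (hG₀ : Measurable G₀)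
    (hG₁i : Integrable (fun ω => G₁ (W ω)) μ) (hG₀i : Integrable (fun ω => G₀ (W ω)) μ)
    (hV₁ : ∀ ω, Z ω = 1 → V ω = G₁ (W ω)) (hV₀ : ∀ ω, Z ω = 0 → V ω = G₀ (W ω)) :
    ∫ ω, Z ω * V ω / π (X ω) ∂μ - ∫ ω, (1 - Z ω) * V ω / (1 - π (X ω)) ∂μ
      = ∫ ω, (G₁ (W ω) - G₀ (W ω)) ∂μ := by
  rw [integral_sub hG₁i hG₀i,
    ← integral_mul_div_propensity hX hW hZ hπ hZ01 (fun x => Set.Ioo_subset_Ioc_self (hπ01 x))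
      hcond hci G₁ hG₁,
    ← integral_one_sub_mul_div_one_sub_propensity hX hW hZ hπ hZ01
      (fun x => Set.Ioo_subset_Ico_self (hπ01 x)) hcond hci G₀ hG₀]
  congr 1 <;> refine integral_congr_ae (ae_of_all _ fun ω => ?_) <;>
    rcases hZ01 ω with h | h <;> simp [h, hV₁, hV₀]

end

section
variable {Ω : Type*} [MeasurableSpace Ω] {μ : Measure Ω}

lemma MeasureTheory.Integrable.mul_of_forall_eq_zero_or_one {E f : Ω → ℝ} (hf : Integrable f μ)
    (hE : Measurable E) (hE01 : ∀ ω, E ω = 0 ∨ E ω = 1) :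
    Integrable (fun ω => E ω * f ω) μ :=
  hf.bdd_mul (c := 1) hE.aestronglyMeasurable
    (ae_of_all _ fun ω => by rcases hE01 ω with h | h <;> simp [h])

variable {D0 D1 : Ω → ℝ}

lemma integral_sub_mul_eq_setIntegral_lt (hD0 : Measurable D0) (hD1 : Measurable D1)
    (hD0b : ∀ ω, D0 ω = 0 ∨ D0 ω = 1) (hD1b : ∀ ω, D1 ω = 0 ∨ D1 ω = 1)
    (hmono : ∀ᵐ ω ∂μ, D0 ω ≤ D1 ω) (f : Ω → ℝ) :
    ∫ ω, (D1 ω - D0 ω) * f ω ∂μ = ∫ ω in {ω | D0 ω < D1 ω}, f ω ∂μ := by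
  rw [← integral_indicator (measurableSet_lt hD0 hD1)]
  refine integral_congr_ae ?_
  filter_upwards [hmono] with ω h
  rcases hD0b ω with h0 | h0 <;> rcases hD1b ω with h1 | h1 <;> simp [h0, h1] at h ⊢
  linarith

end

theorem stmt_11_general {Ω α : Type*} [MeasurableSpace Ω] [StandardBorelSpace Ω]
    [MeasurableSpace α]
    (μ : Measure Ω) [IsProbabilityMeasure μ]
    (X : Ω → α) (Z Y0 Y1 D0 D1 : Ω → ℝ) (π : α → ℝ)
    (hX : Measurable X) (hZm : Measurable Z) (hY0m : Measurable Y0) (hY1m : Measurable Y1)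
    (hD0m : Measurable D0) (hD1m : Measurable D1) (hπ : Measurable π)
    (hZ01 : ∀ ω, Z ω = 0 ∨ Z ω = 1)
    (hD0b : ∀ ω, D0 ω = 0 ∨ D0 ω = 1) (hD1b : ∀ ω, D1 ω = 0 ∨ D1 ω = 1)
    (δ : ℝ) (hδ : 0 < δ) (hπδ : ∀ x, δ < π x ∧ π x < 1 - δ)
    (hY0int : Integrable Y0 μ) (hY1int : Integrable Y1 μ)
    (hcond : μ[Z | MeasurableSpace.comap X inferInstance] =ᵐ[μ] fun ω => π (X ω))
    (hci : CondIndepFun (MeasurableSpace.comap X inferInstance) hX.comap_le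
      (fun ω => (Y0 ω, Y1 ω, D0 ω, D1 ω)) Z μ) :
    let D : Ω → ℝ := fun ω => Z ω * D1 ω + (1 - Z ω) * D0 ω
    let Y : Ω → ℝ := fun ω => D ω * Y1 ω + (1 - D ω) * Y0 ω
    (∫ ω, Z ω * Y ω / π (X ω) ∂μ - ∫ ω, (1 - Z ω) * Y ω / (1 - π (X ω)) ∂μ =
      ∫ ω, (D1 ω - D0 ω) * (Y1 ω - Y0 ω) ∂μ) ∧
    (∫ ω, Z ω * D ω / π (X ω) ∂μ - ∫ ω, (1 - Z ω) * D ω / (1 - π (X ω)) ∂μ =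
      ∫ ω, (D1 ω - D0 ω) ∂μ) ∧
    ((∀ᵐ ω ∂μ, D0 ω ≤ D1 ω) → 0 < μ {ω | D0 ω < D1 ω} →
      (∫ ω, Z ω * Y ω / π (X ω) ∂μ - ∫ ω, (1 - Z ω) * Y ω / (1 - π (X ω)) ∂μ) /
        (∫ ω, Z ω * D ω / π (X ω) ∂μ - ∫ ω, (1 - Z ω) * D ω / (1 - π (X ω)) ∂μ) =
      (∫ ω in {ω | D0 ω < D1 ω}, (Y1 ω - Y0 ω) ∂μ) / (μ {ω | D0 ω < D1 ω}).toReal) := by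
  intro D Y
  have hW : Measurable fun ω => (Y0 ω, Y1 ω, D0 ω, D1 ω) := by fun_prop
  have hπ01 : ∀ x, π x ∈ Set.Ioo 0 1 := fun x => by
    constructor <;> linarith [hπδ x]
  have hint : ∀ {E : Ω → ℝ}, Measurable E → (∀ ω, E ω = 0 ∨ E ω = 1) →
      Integrable (fun ω => Y0 ω + E ω * (Y1 ω - Y0 ω)) μ := fun hE hE01 =>
    hY0int.add ((hY1int.sub hY0int).mul_of_forall_eq_zero_or_one hE hE01)
  have hY_late : ∫ ω, Z ω * Y ω / π (X ω) ∂μ - ∫ ω, (1 - Z ω) * Y ω / (1 - π (X ω)) ∂μ =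
      ∫ ω, (D1 ω - D0 ω) * (Y1 ω - Y0 ω) ∂μ := by
    -- `G₁ W = Y(D(1))` and `G₀ W = Y(D(0))`, written as `Y(0) + d (Y(1) - Y(0))`.
    rw [integral_ipw_contrast hX hW hZm hπ hZ01 hπ01 hcond hci (V := Y)
      (G₁ := fun w => w.1 + w.2.2.2 * (w.2.1 - w.1)) (G₀ := fun w => w.1 + w.2.2.1 * (w.2.1 - w.1))
      (by fun_prop) (by fun_prop) (hint hD1m hD1b) (hint hD0m hD0b)
      (fun ω h => by simp only [Y, D, h]; ring) (fun ω h => by simp only [Y, D, h]; ring)]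
    congr with ω
    ring
  have hD_late : ∫ ω, Z ω * D ω / π (X ω) ∂μ - ∫ ω, (1 - Z ω) * D ω / (1 - π (X ω)) ∂μ =
      ∫ ω, (D1 ω - D0 ω) ∂μ :=
    integral_ipw_contrast hX hW hZm hπ hZ01 hπ01 hcond hci (G₁ := fun w => w.2.2.2)
      (G₀ := fun w => w.2.2.1) (by fun_prop) (by fun_prop)
      (by simpa using (integrable_const (1 : ℝ)).mul_of_forall_eq_zero_or_one hD1m hD1b)
      (by simpa using (integrable_const (1 : ℝ)).mul_of_forall_eq_zero_or_one hD0m hD0b)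
      (fun ω h => by simp [D, h]) (fun ω h => by simp [D, h])
  refine ⟨hY_late, hD_late, fun hmono _ => ?_⟩
  have hcompliers := integral_sub_mul_eq_setIntegral_lt hD0m hD1m hD0b hD1b hmono
  have hshare : ∫ ω, (D1 ω - D0 ω) ∂μ = (μ {ω | D0 ω < D1 ω}).toReal := by
    simpa [measureReal_def] using hcompliers (fun _ => 1)
  rw [hY_late, hD_late, hcompliers, hshare]

/-- IPW identification of the LATE (Frölich 2007). Under conditional
independence `(Y(0),Y(1),D(0),D(1)) ⊥ Z | X`, exclusion (built into `Y = DY(1)+(1-D)Y(0)`),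
and strong overlap `δ < π(X) < 1-δ` where `π(X) = P(Z=1|X)`:
`E[ZY/π(X)] - E[(1-Z)Y/(1-π(X))] = E[(D(1)-D(0))(Y(1)-Y(0))]`,
`E[ZD/π(X)] - E[(1-Z)D/(1-π(X))] = E[D(1)-D(0)]`, and, under monotonicity and a nonzero
complier share, the ratio equals `E[Y(1)-Y(0) | D(1)>D(0)]`. -/
theorem stmt_11 {Ω α : Type*} [MeasurableSpace Ω] [StandardBorelSpace Ω] [Nonempty Ω]
    [MeasurableSpace α]
    (μ : Measure Ω) [IsProbabilityMeasure μ]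
    (X : Ω → α) (Z Y0 Y1 D0 D1 : Ω → ℝ) (π : α → ℝ)
    (hX : Measurable X) (hZm : Measurable Z) (hY0m : Measurable Y0) (hY1m : Measurable Y1)
    (hD0m : Measurable D0) (hD1m : Measurable D1) (hπ : Measurable π)
    (hZ01 : ∀ ω, Z ω = 0 ∨ Z ω = 1)
    (hD0b : ∀ ω, D0 ω = 0 ∨ D0 ω = 1) (hD1b : ∀ ω, D1 ω = 0 ∨ D1 ω = 1)
    (δ : ℝ) (hδ : 0 < δ) (hπδ : ∀ x, δ < π x ∧ π x < 1 - δ)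
    (hY0int : Integrable Y0 μ) (hY1int : Integrable Y1 μ)
    (hcond : μ[Z | MeasurableSpace.comap X inferInstance] =ᵐ[μ] fun ω => π (X ω))
    (hci : CondIndepFun (MeasurableSpace.comap X inferInstance) hX.comap_le
      (fun ω => (Y0 ω, Y1 ω, D0 ω, D1 ω)) Z μ) :
    let D : Ω → ℝ := fun ω => Z ω * D1 ω + (1 - Z ω) * D0 ω
    let Y : Ω → ℝ := fun ω => D ω * Y1 ω + (1 - D ω) * Y0 ω
    (∫ ω, Z ω * Y ω / π (X ω) ∂μ - ∫ ω, (1 - Z ω) * Y ω / (1 - π (X ω)) ∂μ =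
      ∫ ω, (D1 ω - D0 ω) * (Y1 ω - Y0 ω) ∂μ) ∧
    (∫ ω, Z ω * D ω / π (X ω) ∂μ - ∫ ω, (1 - Z ω) * D ω / (1 - π (X ω)) ∂μ =
      ∫ ω, (D1 ω - D0 ω) ∂μ) ∧
    ((∀ᵐ ω ∂μ, D0 ω ≤ D1 ω) → 0 < μ {ω | D0 ω < D1 ω} →
      (∫ ω, Z ω * Y ω / π (X ω) ∂μ - ∫ ω, (1 - Z ω) * Y ω / (1 - π (X ω)) ∂μ) /
        (∫ ω, Z ω * D ω / π (X ω) ∂μ - ∫ ω, (1 - Z ω) * D ω / (1 - π (X ω)) ∂μ) =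
      (∫ ω in {ω | D0 ω < D1 ω}, (Y1 ω - Y0 ω) ∂μ) / (μ {ω | D0 ω < D1 ω}).toReal) :=
  stmt_11_general μ X Z Y0 Y1 D0 D1 π hX hZm hY0m hY1m hD0m hD1m hπ hZ01 hD0b hD1b δ hδ hπδ hY0int
    hY1int hcond hci
end
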